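/- Let β̂ := σᵤ/√(ΔΣ₀) and let ε > 0 satisfy ε < β̂ and εσᵤ²/((β̂ − ε)³ΔΣ₀) < 2. Then for every real β with 0 < |β − β̂| < ε one has |T(β) − β̂| ≤ (σᵤ²/(2(β̂ − ε)³ΔΣ₀))·(β − β̂)², and consequently |T(β) − β̂| ≤ ρ·|β − β̂| with ρ := εσᵤ²/(2(β̂ − ε)³ΔΣ₀) < 1. -/

import Mathlib

/-!
`T` is Heron's (Newton's) iteration `β ↦ (β + β̂² / β) / 2` for the square root `β̂` of
`σu² / (Δ Sig0)`, so its error is squared at each step: `T β - β̂ = (β - β̂)² / (2 β)`.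
On `β > β̂ - ε > 0` the factor `1 / (2 β)` is at most
`1 / (2 (β̂ - ε)) ≤ β̂² / (2 (β̂ - ε)³) = σu² / (2 (β̂ - ε)³ Δ Sig0)`.
-/

/-- The one-period policy-iteration map `T(β) = (β² Sig0 Δ + σu²)/(2 Δ β Sig0)`. -/
noncomputable def T1p (Δ σu Sig0 β : ℝ) : ℝ :=
  (β ^ 2 * Sig0 * Δ + σu ^ 2) / (2 * Δ * β * Sig0)

theorem T1p_sub_eq_sq_div {Δ σu Sig0 b β : ℝ} (hΔ : Δ ≠ 0) (hSig : Sig0 ≠ 0)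
    (hb : b ^ 2 * (Δ * Sig0) = σu ^ 2) (hβ : β ≠ 0) :
    T1p Δ σu Sig0 β - b = (β - b) ^ 2 / (2 * β) := by
  rw [T1p, ← hb]
  field_simp
  ring

theorem sq_sub_div_two_mul_le {m b β : ℝ} (hm : 0 < m) (hmβ : m ≤ β) (hmb : m ≤ b) :
    (β - b) ^ 2 / (2 * β) ≤ b ^ 2 / (2 * m ^ 3) * (β - b) ^ 2 :=
  calc (β - b) ^ 2 / (2 * β) ≤ (β - b) ^ 2 / (2 * m) := by gcongr
    _ = 1 / (2 * m) * (β - b) ^ 2 := by ring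
    _ ≤ b ^ 2 / (2 * m ^ 3) * (β - b) ^ 2 := by
      refine mul_le_mul_of_nonneg_right ?_ (sq_nonneg _)
      rw [div_le_div_iff₀ (by positivity) (by positivity)]
      nlinarith [pow_le_pow_left₀ hm.le hmb 2, pow_pos hm 3]

theorem mul_sq_le_mul_mul_abs {C x ε : ℝ} (hC : 0 ≤ C) (hx : |x| ≤ ε) :
    C * x ^ 2 ≤ ε * C * |x| := by
  rw [← sq_abs, sq, mul_comm ε C, mul_assoc]
  gcongr

theorem one_period_contraction_bound_general (Δ σu Sig0 : ℝ) (hΔ : 0 < Δ)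
    (hSig : 0 < Sig0) (ε : ℝ)
    (hεsmall : ε < σu / Real.sqrt (Δ * Sig0))
    (hεcond : ε * σu ^ 2 / ((σu / Real.sqrt (Δ * Sig0) - ε) ^ 3 * Δ * Sig0) < 2)
    (β : ℝ)
    (hhigh : |β - σu / Real.sqrt (Δ * Sig0)| < ε) :
    |T1p Δ σu Sig0 β - σu / Real.sqrt (Δ * Sig0)| ≤
      σu ^ 2 / (2 * (σu / Real.sqrt (Δ * Sig0) - ε) ^ 3 * Δ * Sig0) *
        (β - σu / Real.sqrt (Δ * Sig0)) ^ 2 ∧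
    |T1p Δ σu Sig0 β - σu / Real.sqrt (Δ * Sig0)| ≤
      ε * σu ^ 2 / (2 * (σu / Real.sqrt (Δ * Sig0) - ε) ^ 3 * Δ * Sig0) *
        |β - σu / Real.sqrt (Δ * Sig0)| ∧
    ε * σu ^ 2 / (2 * (σu / Real.sqrt (Δ * Sig0) - ε) ^ 3 * Δ * Sig0) < 1 := by
  set b := σu / Real.sqrt (Δ * Sig0)
  have hb : b ^ 2 * (Δ * Sig0) = σu ^ 2 := by
    rw [div_pow, Real.sq_sqrt (by positivity), div_mul_cancel₀ _ (by positivity)]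
  have hm : 0 < b - ε := sub_pos.mpr hεsmall
  have hmβ : b - ε < β := by linarith [(abs_lt.mp hhigh).1]
  have hβ : 0 < β := hm.trans hmβ
  have hcoef : σu ^ 2 / (2 * (b - ε) ^ 3 * Δ * Sig0) = b ^ 2 / (2 * (b - ε) ^ 3) := by
    rw [← hb]
    field_simp
  have hquad : |T1p Δ σu Sig0 β - b| ≤ σu ^ 2 / (2 * (b - ε) ^ 3 * Δ * Sig0) * (β - b) ^ 2 := by
    rw [T1p_sub_eq_sq_div hΔ.ne' hSig.ne' hb hβ.ne', abs_of_nonneg (by positivity), hcoef]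
    exact sq_sub_div_two_mul_le hm hmβ.le (by linarith [abs_nonneg (β - b)])
  refine ⟨hquad, ?_, ?_⟩
  · rw [mul_div_assoc]
    exact hquad.trans (mul_sq_le_mul_mul_abs (by positivity) hhigh.le)
  · rw [show 2 * (b - ε) ^ 3 * Δ * Sig0 = 2 * ((b - ε) ^ 3 * Δ * Sig0) by ring,
      div_mul_eq_div_div_swap, div_lt_one two_pos]
    exact hεcond

/-- Quadratic local contraction bound: with `β̂ := σu/√(Δ Sig0)` and `ε > 0`
satisfying `ε < β̂` and `ε σu²/((β̂ - ε)³ Δ Sig0) < 2`, every `β` with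
`0 < |β - β̂| < ε` satisfies `|T(β) - β̂| ≤ (σu²/(2(β̂-ε)³ Δ Sig0)) (β - β̂)²`, and
consequently `|T(β) - β̂| ≤ ρ |β - β̂|` with `ρ := ε σu²/(2(β̂-ε)³ Δ Sig0) < 1`. -/
theorem one_period_contraction_bound (Δ σu Sig0 : ℝ) (hΔ : 0 < Δ) (hσ : 0 < σu)
    (hSig : 0 < Sig0) (ε : ℝ) (hε : 0 < ε)
    (hεsmall : ε < σu / Real.sqrt (Δ * Sig0))
    (hεcond : ε * σu ^ 2 / ((σu / Real.sqrt (Δ * Sig0) - ε) ^ 3 * Δ * Sig0) < 2)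
    (β : ℝ) (hlow : 0 < |β - σu / Real.sqrt (Δ * Sig0)|)
    (hhigh : |β - σu / Real.sqrt (Δ * Sig0)| < ε) :
    |T1p Δ σu Sig0 β - σu / Real.sqrt (Δ * Sig0)| ≤
      σu ^ 2 / (2 * (σu / Real.sqrt (Δ * Sig0) - ε) ^ 3 * Δ * Sig0) *
        (β - σu / Real.sqrt (Δ * Sig0)) ^ 2 ∧
    |T1p Δ σu Sig0 β - σu / Real.sqrt (Δ * Sig0)| ≤
      ε * σu ^ 2 / (2 * (σu / Real.sqrt (Δ * Sig0) - ε) ^ 3 * Δ * Sig0) *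
        |β - σu / Real.sqrt (Δ * Sig0)| ∧
    ε * σu ^ 2 / (2 * (σu / Real.sqrt (Δ * Sig0) - ε) ^ 3 * Δ * Sig0) < 1 :=
  one_period_contraction_bound_general Δ σu Sig0 hΔ hSig ε hεsmall hεcond β hhigh
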